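/- arXiv:2101.03874 — 2 statements merged into one kernel-verified Lean document; each statement's English description precedes it below -/
import Mathlib

section
/- Let m be a natural number, either m = 0 or m ≥ 2, let F : ℝ → ℝ be C¹ and G : ℝ → ℝ be C². Set P(x,y) = y − |y|^m·F(x), Q(x,y) = −G'(x)/2, and V(x,y) = G(x) + y² − y·|y|^m·F(x). Then, identically on ℝ², V_x·P + V_y·Q − (P_x + Q_y)·V = (1/2)·|y|^m·((m−1)·F(x)·G'(x) + 2·F'(x)·G(x)). -/
/-!
The identity is a direct computation. The only non-smooth ingredient is `y ↦ y |y|^m`, which is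
differentiable with derivative `(m + 1) |y|^m` for every `m` (at `0` its difference quotient is
`|y|^m`); once the four partial derivatives are known, the identity is a ring identity in
`y, |y|^m, F, F', G, G'`.
-/

open MeasureTheory

noncomputable def pdx (f : ℝ × ℝ → ℝ) (p : ℝ × ℝ) : ℝ := deriv (fun u => f (u, p.2)) p.1
noncomputable def pdy (f : ℝ × ℝ → ℝ) (p : ℝ × ℝ) : ℝ := deriv (fun v => f (p.1, v)) p.2

/-- A solution of the planar system `ẋ = P(x,y)`, `ẏ = Q(x,y)`. -/
def IsSolution (P Q : ℝ × ℝ → ℝ) (γ : ℝ → ℝ × ℝ) : Prop :=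
  ∀ t, HasDerivAt γ (P (γ t), Q (γ t)) t

/-- A curve is periodic if it has a positive period. -/
def IsPeriodicSol (γ : ℝ → ℝ × ℝ) : Prop :=
  ∃ T > 0, ∀ t, γ (t + T) = γ t

/-- A curve is nonconstant. -/
def IsNonconstant (γ : ℝ → ℝ × ℝ) : Prop := ∃ t s, γ t ≠ γ s

/-- A periodic orbit of the system: the image of a nonconstant periodic solution. -/
def IsPeriodicOrbit (P Q : ℝ × ℝ → ℝ) (O : Set (ℝ × ℝ)) : Prop :=
  ∃ γ : ℝ → ℝ × ℝ, IsSolution P Q γ ∧ IsPeriodicSol γ ∧ IsNonconstant γ ∧ O = Set.range γ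

open Filter Topology

theorem hasDerivAt_mul_abs_pow (m : ℕ) (y : ℝ) :
    HasDerivAt (fun v : ℝ => v * |v| ^ m) ((m + 1) * |y| ^ m) y := by
  rcases eq_or_ne y 0 with rfl | hy
  · rw [hasDerivAt_iff_tendsto_slope]
    have hslope :
        (fun v : ℝ => |v| ^ m) =ᶠ[𝓝[≠] 0] slope (fun v : ℝ => v * |v| ^ m) 0 := by
      filter_upwards [self_mem_nhdsWithin] with v hv
      rw [slope_def_field, zero_mul, sub_zero, sub_zero, mul_div_cancel_left₀ _ hv]
    have hvalue : ((m : ℝ) + 1) * |(0 : ℝ)| ^ m = |(0 : ℝ)| ^ m := by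
      rcases m.eq_zero_or_pos with rfl | hm
      · simp
      · simp [hm.ne']
    rw [hvalue]
    exact (((continuous_abs.pow m).tendsto 0).mono_left nhdsWithin_le_nhds).congr' hslope
  · refine ((hasDerivAt_id' y).fun_mul ((hasDerivAt_abs hy).fun_pow m)).congr_deriv ?_
    rcases m with _ | k
    · simp
    · simp only [Nat.cast_succ, add_tsub_cancel_right, pow_succ]
      linear_combination ((k : ℝ) + 1) * |y| ^ k * self_mul_sign y

theorem pdy_comp_fst (g : ℝ → ℝ) (p : ℝ × ℝ) : pdy (fun q => g q.1) p = 0 := by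
  simp [pdy]

section Lienard

variable (m : ℕ) (F G : ℝ → ℝ) (p : ℝ × ℝ)

def lienardP (q : ℝ × ℝ) : ℝ := q.2 - |q.2| ^ m * F q.1

def lienardV (q : ℝ × ℝ) : ℝ := G q.1 + q.2 ^ 2 - q.2 * |q.2| ^ m * F q.1

variable {F G}

theorem pdx_lienardP (hF : DifferentiableAt ℝ F p.1) :
    pdx (lienardP m F) p = -(|p.2| ^ m * deriv F p.1) :=
  (hF.hasDerivAt.const_mul (|p.2| ^ m)).const_sub p.2 |>.deriv

theorem pdx_lienardV (hF : DifferentiableAt ℝ F p.1) (hG : DifferentiableAt ℝ G p.1) :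
    pdx (lienardV m F G) p = deriv G p.1 - p.2 * |p.2| ^ m * deriv F p.1 :=
  (hG.hasDerivAt.add_const (p.2 ^ 2)).fun_sub (hF.hasDerivAt.const_mul (p.2 * |p.2| ^ m)) |>.deriv

theorem pdy_lienardV : pdy (lienardV m F G) p = 2 * p.2 - (m + 1) * |p.2| ^ m * F p.1 := by
  have h := ((hasDerivAt_pow 2 p.2).const_add (G p.1)).fun_sub
    ((hasDerivAt_mul_abs_pow m p.2).mul_const (F p.1))
  norm_num at h
  exact h.deriv

end Lienard

theorem stmt_9_general (m : ℕ)
    (F G : ℝ → ℝ) (hF : ContDiff ℝ 1 F) (hG : ContDiff ℝ 2 G)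
    (P Q V : ℝ × ℝ → ℝ)
    (hP : P = fun p => p.2 - |p.2| ^ m * F p.1)
    (hQ : Q = fun p => -(deriv G p.1) / 2)
    (hV : V = fun p => G p.1 + p.2 ^ 2 - p.2 * |p.2| ^ m * F p.1) :
    ∀ p : ℝ × ℝ,
      pdx V p * P p + pdy V p * Q p - (pdx P p + pdy Q p) * V p =
        (1 / 2) * |p.2| ^ m *
          (((m : ℝ) - 1) * F p.1 * deriv G p.1 + 2 * deriv F p.1 * G p.1) := by
  intro p
  obtain rfl : P = lienardP m F := hP
  obtain rfl : V = lienardV m F G := hV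
  have hF' : DifferentiableAt ℝ F p.1 := hF.differentiable one_ne_zero p.1
  have hG' : DifferentiableAt ℝ G p.1 := hG.differentiable two_ne_zero p.1
  rw [pdx_lienardV m p hF' hG', pdy_lienardV, pdx_lienardP m p hF', hQ,
    pdy_comp_fst (fun x => -deriv G x / 2)]
  simp only [lienardP, lienardV]
  ring

/-- The Dulac identity for the extended Liénard system: with
`V = G(x) + y² − y|y|^m F(x)`, `P = y − |y|^m F(x)`, `Q = −G'(x)/2`, one has
`V_x P + V_y Q − (P_x + Q_y) V = (1/2)|y|^m ((m−1)FG' + 2F'G)`. -/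
theorem stmt_9 (m : ℕ) (hm : m = 0 ∨ 2 ≤ m)
    (F G : ℝ → ℝ) (hF : ContDiff ℝ 1 F) (hG : ContDiff ℝ 2 G)
    (P Q V : ℝ × ℝ → ℝ)
    (hP : P = fun p => p.2 - |p.2| ^ m * F p.1)
    (hQ : Q = fun p => -(deriv G p.1) / 2)
    (hV : V = fun p => G p.1 + p.2 ^ 2 - p.2 * |p.2| ^ m * F p.1) :
    ∀ p : ℝ × ℝ,
      pdx V p * P p + pdy V p * Q p - (pdx P p + pdy Q p) * V p =
        (1 / 2) * |p.2| ^ m *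
          (((m : ℝ) - 1) * F p.1 * deriv G p.1 + 2 * deriv F p.1 * G p.1) :=
  stmt_9_general m F G hF hG P Q V hP hQ hV
end

section
/- Let m ≥ 2 be an integer. There exists λ₀ > 0 such that for every real λ with 0 < |λ| < λ₀, the system ẋ = y − λ·|y|^m·(x³ − x), ẏ = −x has at least one nonconstant periodic solution. -/
open MeasureTheory

/-!
In the polar coordinates `x = r cos ψ`, `y = -r sin ψ` the system `ẋ = y + ε F(x, y)`, `ẏ = -x`
reads `ṙ = ε cos ψ F`, `ψ̇ = 1 - ε sin ψ F / r`, so with the angle as time the radius solves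
`dr/dψ = ε cos ψ F / (1 - ε sin ψ F / r)`. Over one turn its Poincaré map is
`P(r) = r + ε M(r) + O(ε²)`, where `M(r) = ∫₀^{2π} cos ψ F(r cos ψ, -r sin ψ) dψ` is the
Melnikov integral. If `M(r₁) > 0 > M(r₂)` with `r₁ ≤ r₂`, then for small `ε > 0` the map `P`,
which is monotone because solutions of a scalar equation cannot cross, moves `r₁` up and `r₂`
down, so it has a fixed point; the corresponding `2π`-periodic radius, reparametrised by time, is
a periodic orbit. For `ε < 0` one applies this to the time-reversed system `(t, y) ↦ (-t, -y)`,
which has the same Melnikov integral. For `F = -|y|^m (x³ - x)` one finds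
`M(r) = r^(m+1) (c₂ - r² c₄)` with `c_k = ∫₀^{2π} |sin ψ|^m cos^k ψ dψ > 0`, which changes sign.
-/

open Real Set Filter Topology Function intervalIntegral Metric
open scoped NNReal

section ODE

theorem exists_forall_hasDerivAt_of_lipschitzWith {E : Type*} [NormedAddCommGroup E]
    [NormedSpace ℝ E] [CompleteSpace E] {v : ℝ → E → E} {K : ℝ≥0} {C : ℝ}
    (hv : ∀ t, LipschitzWith K (v t)) (hvc : ∀ x, Continuous (v · x))
    (hC : ∀ t x, ‖v t x‖ ≤ C) (x₀ : E) :
    ∃ f : ℝ → E, f 0 = x₀ ∧ ∀ t, HasDerivAt f (v t (f t)) t := by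
  let I : ℕ → Set ℝ := fun n => Ioo (-(n + 1 : ℝ)) (n + 1)
  have hI : ∀ {n : ℕ} {t : ℝ}, t ∈ I n ↔ |t| < n + 1 := fun {_ _} => abs_lt.symm
  have local_sol : ∀ n : ℕ, ∃ f : ℝ → E, f 0 = x₀ ∧ ∀ t ∈ I n, HasDerivAt f (v t (f t)) t := by
    intro n
    have hPL : IsPicardLindelof v (tmin := -(n + 1 : ℝ)) (tmax := n + 1)
        ⟨0, by constructor <;> linarith [(n.cast_nonneg : (0 : ℝ) ≤ n)]⟩ x₀
        (C.toNNReal * (n + 1)) 0 C.toNNReal K :=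
      { lipschitzOnWith := fun t _ => (hv t).lipschitzOnWith
        continuousOn := fun x _ => (hvc x).continuousOn
        norm_le := fun t _ x _ => (hC t x).trans (Real.le_coe_toNNReal C)
        mul_max_le := by simp }
    obtain ⟨f, hf0, hf⟩ := hPL.exists_eq_forall_mem_Icc_hasDerivWithinAt₀
    exact ⟨f, hf0, fun t ht =>
      (hf t (Ioo_subset_Icc_self ht)).hasDerivAt (Icc_mem_nhds ht.1 ht.2)⟩
  choose sol hsol0 hsol using local_sol
  have agree : ∀ n k t, t ∈ I n → t ∈ I k → sol n t = sol k t := by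
    intro n k t hn hk
    wlog hnk : n ≤ k generalizing n k
    · exact (this k n hk hn (le_of_not_ge hnk)).symm
    have hnk' : (n : ℝ) ≤ k := by exact_mod_cast hnk
    have hsub : I n ⊆ I k := Ioo_subset_Ioo (by linarith) (by linarith)
    exact ODE_solution_unique_of_mem_Ioo (s := fun _ => univ) (fun t _ => (hv t).lipschitzOnWith)
      (hI.2 (by simp; positivity)) (fun t ht => ⟨hsol n t ht, trivial⟩)
      (fun t ht => ⟨hsol k t (hsub ht), trivial⟩) ((hsol0 n).trans (hsol0 k).symm) hn
  have hceil : ∀ t, t ∈ I ⌈|t|⌉₊ := fun t => hI.2 ((Nat.le_ceil _).trans_lt (lt_add_one _))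
  refine ⟨fun t => sol ⌈|t|⌉₊ t, by simpa using hsol0 0, fun t => ?_⟩
  have hev : (fun s => sol ⌈|s|⌉₊ s) =ᶠ[𝓝 t] sol ⌈|t|⌉₊ :=
    eventually_of_mem (isOpen_Ioo.mem_nhds (hceil t)) fun s hs => agree _ _ s (hceil s) hs
  rw [hev.hasDerivAt_iff]
  exact hsol _ t (hceil t)

variable {v : ℝ → ℝ → ℝ} {K : ℝ≥0} {f g : ℝ → ℝ}

theorem ODE_solution_le_of_le (hv : ∀ t, LipschitzWith K (v t))
    (hf : ∀ t, HasDerivAt f (v t (f t)) t) (hg : ∀ t, HasDerivAt g (v t (g t)) t)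
    {t₀ : ℝ} (h : f t₀ ≤ g t₀) (t : ℝ) : f t ≤ g t := by
  by_contra! hlt
  have hcont : ContinuousOn (fun s => f s - g s) (uIcc t₀ t) :=
    (continuous_iff_continuousAt.2 fun s => ((hf s).sub (hg s)).continuousAt).continuousOn
  obtain ⟨c, -, hc⟩ := intermediate_value_uIcc hcont
    (mem_uIcc_of_le (a := f t₀ - g t₀) (b := f t - g t) (x := 0) (by linarith) (by linarith))
  have hfg : f = g := ODE_solution_unique_univ (s := fun _ => univ)
    (fun t => (hv t).lipschitzOnWith) (fun t => ⟨hf t, trivial⟩) (fun t => ⟨hg t, trivial⟩)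
    (sub_eq_zero.1 hc)
  exact hlt.ne' (by rw [hfg])

theorem ODE_solution_periodic (hv : ∀ t, LipschitzWith K (v t)) {p : ℝ}
    (hvp : ∀ t, v (t + p) = v t) (hf : ∀ t, HasDerivAt f (v t (f t)) t) (hp : f p = f 0) :
    Periodic f p := by
  have hshift : ∀ t, HasDerivAt (fun s => f (s + p)) (v t (f (t + p))) t := fun t => by
    simpa [hvp] using (hf (t + p)).comp_add_const t p
  exact congrFun (ODE_solution_unique_univ (s := fun _ => univ) (t₀ := 0)
    (fun t => (hv t).lipschitzOnWith) (fun t => ⟨hshift t, trivial⟩) (fun t => ⟨hf t, trivial⟩)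
    (by simpa using hp))

end ODE

theorem Monotone.exists_isFixedPt_mem_Icc {P : ℝ → ℝ} (hP : Monotone P) {a b : ℝ} (hab : a ≤ b)
    (ha : a ≤ P a) (hb : P b ≤ b) : ∃ s ∈ Icc a b, IsFixedPt P s := by
  let S := {x ∈ Icc a b | x ≤ P x}
  have haS : a ∈ S := ⟨⟨le_rfl, hab⟩, ha⟩
  have hbdd : BddAbove S := ⟨b, fun x hx => hx.1.2⟩
  have has : a ≤ sSup S := le_csSup hbdd haS
  have hsb : sSup S ≤ b := csSup_le ⟨a, haS⟩ fun x hx => hx.1.2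
  have hle : sSup S ≤ P (sSup S) :=
    csSup_le ⟨a, haS⟩ fun x hx => hx.2.trans (hP (le_csSup hbdd hx))
  have hPS : P (sSup S) ∈ S :=
    ⟨⟨ha.trans (hP has), (hP hsb).trans hb⟩, hP hle⟩
  exact ⟨sSup S, ⟨has, hsb⟩, le_antisymm (le_csSup hbdd hPS) hle⟩

theorem Function.Periodic.exists_orderIso_hasDerivAt {w : ℝ → ℝ} {p : ℝ} (hper : Periodic w p)
    (hp : 0 < p) (hw : Continuous w) (hpos : ∀ x, 0 < w x) :
    ∃ (Φ : ℝ ≃o ℝ) (T : ℝ), (∀ t, HasDerivAt Φ (w (Φ t)) t) ∧ ∀ t, Φ (t + T) = Φ t + p := by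
  have hu : Continuous fun x => (w x)⁻¹ := hw.inv₀ fun x => (hpos x).ne'
  have hu_per : Periodic (fun x => (w x)⁻¹) p := fun x => by simp only [hper x]
  have hu_int : ∀ a b, IntervalIntegrable (fun x => (w x)⁻¹) volume a b :=
    fun a b => hu.intervalIntegrable a b
  let τ : ℝ → ℝ := fun φ => ∫ x in 0..φ, (w x)⁻¹
  have hτ : ∀ φ, HasDerivAt τ (w φ)⁻¹ φ := fun φ =>
    integral_hasDerivAt_right (hu_int 0 φ) (hu.stronglyMeasurableAtFilter _ _) hu.continuousAt
  have hτ_mono : StrictMono τ :=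
    strictMono_of_hasDerivAt_pos hτ fun φ => inv_pos.2 (hpos φ)
  have hτ_surj : Surjective τ :=
    (continuous_iff_continuousAt.2 fun φ => (hτ φ).continuousAt).surjective
      (hu_per.tendsto_atTop_intervalIntegral_of_pos' (hu_int 0 p) (fun x => inv_pos.2 (hpos x)) hp)
      (hu_per.tendsto_atBot_intervalIntegral_of_pos' (hu_int 0 p) (fun x => inv_pos.2 (hpos x)) hp)
  let E := hτ_mono.orderIsoOfSurjective τ hτ_surj
  have hτΦ : ∀ s, τ (E.symm s) = s := E.apply_symm_apply
  refine ⟨E.symm, τ p, fun t => ?_, fun t => ?_⟩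
  · simpa using HasDerivAt.of_local_left_inverse E.symm.continuous.continuousAt
      (hτ (E.symm t)) (inv_ne_zero (hpos _).ne') (Eventually.of_forall hτΦ)
  · apply E.injective
    change τ (E.symm (t + τ p)) = τ (E.symm t + p)
    have hshift : τ (E.symm t + p) = τ (E.symm t) + τ p := by
      simpa using hu_per.intervalIntegral_add_eq_add 0 (E.symm t) hu_int
    rw [hτΦ, hshift, hτΦ]

theorem abs_div_sub_div_le {x y u v c : ℝ} (hc : 0 < c) (hu : c ≤ |u|) (hv : c ≤ |v|) :
    |x / u - y / v| ≤ |x - y| / c + |y| * |u - v| / c ^ 2 := by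
  have hu0 : u ≠ 0 := abs_pos.1 (hc.trans_le hu)
  have hv0 : v ≠ 0 := abs_pos.1 (hc.trans_le hv)
  have key : x / u - y / v = (x - y) / u + y * (v - u) / (u * v) := by
    field_simp; ring
  rw [key]
  refine (abs_add_le _ _).trans (add_le_add ?_ ?_)
  · rw [abs_div]
    exact div_le_div_of_nonneg_left (abs_nonneg _) hc hu
  · rw [abs_div, abs_mul, abs_mul, abs_sub_comm v u, sq]
    exact div_le_div_of_nonneg_left (by positivity) (by positivity)
      (mul_le_mul hu hv hc.le (abs_nonneg _))

/-- Clockwise, so that the linear centre `ẋ = y`, `ẏ = -x` is `t ↦ polar r t`. -/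
noncomputable def polar (r ψ : ℝ) : ℝ × ℝ := (r * cos ψ, -(r * sin ψ))

noncomputable def radialSpeed (F : ℝ × ℝ → ℝ) (ε ψ r : ℝ) : ℝ := ε * cos ψ * F (polar r ψ)

noncomputable def angularSpeed (F : ℝ × ℝ → ℝ) (ε ψ r : ℝ) : ℝ :=
  1 - ε * sin ψ * F (polar r ψ) / r

noncomputable def angleSlope (F : ℝ × ℝ → ℝ) (ε ψ r : ℝ) : ℝ :=
  radialSpeed F ε ψ r / angularSpeed F ε ψ r

noncomputable def melnikovIntegral (F : ℝ × ℝ → ℝ) (r : ℝ) : ℝ :=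
  ∫ ψ in 0..2 * π, cos ψ * F (polar r ψ)

theorem isSolution_polar {F : ℝ × ℝ → ℝ} {ε : ℝ} {r φ r' φ' : ℝ → ℝ}
    (hr : ∀ t, HasDerivAt r (r' t) t) (hφ : ∀ t, HasDerivAt φ (φ' t) t) (hr0 : ∀ t, r t ≠ 0)
    (hr' : ∀ t, r' t = radialSpeed F ε (φ t) (r t))
    (hφ' : ∀ t, φ' t = angularSpeed F ε (φ t) (r t)) :
    IsSolution (fun p => p.2 + ε * F p) (fun p => -p.1) (fun t => polar (r t) (φ t)) := by
  intro t
  have hrφ : r t * φ' t = r t - ε * sin (φ t) * F (polar (r t) (φ t)) := by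
    rw [hφ', angularSpeed]
    field_simp [hr0 t]
  refine (((hr t).mul (hφ t).cos).prodMk ((hr t).mul (hφ t).sin).neg).congr_deriv ?_
  ext
  · change _ = -(r t * sin (φ t)) + ε * F (polar (r t) (φ t))
    rw [hr', radialSpeed]
    linear_combination -sin (φ t) * hrφ + ε * F (polar (r t) (φ t)) * sin_sq_add_cos_sq (φ t)
  · change _ = -(r t * cos (φ t))
    rw [hr', radialSpeed]
    linear_combination -cos (φ t) * hrφ

theorem polar_add_two_pi (r ψ : ℝ) : polar r (ψ + 2 * π) = polar r ψ := by
  simp [polar]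

theorem angleSlope_add_two_pi (F : ℝ × ℝ → ℝ) (ε ψ r : ℝ) :
    angleSlope F ε (ψ + 2 * π) r = angleSlope F ε ψ r := by
  simp only [angleSlope, radialSpeed, angularSpeed, polar_add_two_pi, sin_add_two_pi,
    cos_add_two_pi]

@[fun_prop]
theorem Continuous.polar {α : Type*} [TopologicalSpace α] {f g : α → ℝ} (hf : Continuous f)
    (hg : Continuous g) : Continuous fun x => _root_.polar (f x) (g x) := by
  unfold _root_.polar; fun_prop

theorem polar_mem_closedBall {r b : ℝ} (hr : |r| ≤ b) (ψ : ℝ) : polar r ψ ∈ closedBall 0 b := by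
  rw [mem_closedBall_zero_iff, norm_prod_le_iff]
  simp only [polar, norm_neg, norm_mul, Real.norm_eq_abs]
  exact ⟨(mul_le_of_le_one_right (abs_nonneg r) (abs_cos_le_one ψ)).trans hr,
    (mul_le_of_le_one_right (abs_nonneg r) (abs_sin_le_one ψ)).trans hr⟩

theorem dist_polar_le (r s ψ : ℝ) : dist (polar r ψ) (polar s ψ) ≤ |r - s| := by
  rw [Prod.dist_eq, max_le_iff, Real.dist_eq, Real.dist_eq]
  simp only [polar, ← sub_mul, neg_sub_neg, ← sub_mul, abs_mul, abs_sub_comm s r]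
  exact ⟨mul_le_of_le_one_right (abs_nonneg _) (abs_cos_le_one ψ),
    mul_le_of_le_one_right (abs_nonneg _) (abs_sin_le_one ψ)⟩

theorem IsSolution.comp_neg {P Q : ℝ × ℝ → ℝ} {γ : ℝ → ℝ × ℝ} (hγ : IsSolution P Q γ) :
    IsSolution (fun p => -P (p.1, -p.2)) (fun p => Q (p.1, -p.2))
      (fun t => ((γ (-t)).1, -(γ (-t)).2)) := by
  intro t
  let L : ℝ × ℝ →L[ℝ] ℝ × ℝ := (ContinuousLinearMap.fst ℝ ℝ ℝ).prod (-ContinuousLinearMap.snd ℝ ℝ ℝ)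
  refine (L.hasFDerivAt.comp_hasDerivAt t ((hγ (-t)).scomp t (hasDerivAt_neg t))).congr_deriv ?_
  simp [L]

theorem IsPeriodicSol.comp_neg {γ : ℝ → ℝ × ℝ} (hγ : IsPeriodicSol γ) :
    IsPeriodicSol (fun t => ((γ (-t)).1, -(γ (-t)).2)) := by
  obtain ⟨T, hT, hper⟩ := hγ
  refine ⟨T, hT, fun t => ?_⟩
  have h : γ (-(t + T)) = γ (-t) := by rw [← hper (-(t + T))]; ring_nf
  simp only [h]

theorem IsNonconstant.comp_neg {γ : ℝ → ℝ × ℝ} (hγ : IsNonconstant γ) :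
    IsNonconstant (fun t => ((γ (-t)).1, -(γ (-t)).2)) := by
  obtain ⟨t, s, hts⟩ := hγ
  refine ⟨-t, -s, fun h => hts ?_⟩
  simpa [Prod.ext_iff] using h

theorem exists_isPeriodicOrbit_of_angleSlope {F : ℝ × ℝ → ℝ} (hF : Continuous F) {ε : ℝ}
    {ρ : ℝ → ℝ} (hρ : ∀ ψ, HasDerivAt ρ (angleSlope F ε ψ (ρ ψ)) ψ) (hρper : Periodic ρ (2 * π))
    (hρpos : ∀ ψ, 0 < ρ ψ) (hspeed : ∀ ψ, 0 < angularSpeed F ε ψ (ρ ψ)) :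
    ∃ O, IsPeriodicOrbit (fun p => p.2 + ε * F p) (fun p => -p.1) O := by
  let w : ℝ → ℝ := fun ψ => angularSpeed F ε ψ (ρ ψ)
  have hρc : Continuous ρ := continuous_iff_continuousAt.2 fun ψ => (hρ ψ).continuousAt
  have hw : Continuous w :=
    continuous_const.sub (Continuous.div (by fun_prop) hρc fun ψ => (hρpos ψ).ne')
  have hwper : Periodic w (2 * π) := fun ψ => by
    simp only [w, angularSpeed, hρper ψ, polar_add_two_pi, sin_add_two_pi]
  obtain ⟨Φ, T, hΦ, hΦT⟩ := hwper.exists_orderIso_hasDerivAt two_pi_pos hw hspeed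
  refine ⟨_, fun t => polar (ρ (Φ t)) (Φ t), ?_, ⟨T, ?_, fun t => ?_⟩, ?_, rfl⟩
  · exact isSolution_polar (fun t => (hρ (Φ t)).comp t (hΦ t)) hΦ (fun t => (hρpos _).ne')
      (fun t => div_mul_cancel₀ _ (hspeed (Φ t)).ne') fun t => rfl
  · have h := hΦT 0
    rw [zero_add] at h
    exact Φ.lt_iff_lt.1 (by rw [h]; linarith [two_pi_pos])
  · simp only [hΦT, hρper _, polar_add_two_pi]
  · refine ⟨Φ.symm 0, Φ.symm π, fun h => ?_⟩
    have h1 := congrArg Prod.fst h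
    simp only [OrderIso.apply_symm_apply, polar, cos_zero, cos_pi] at h1
    linarith [hρpos 0, hρpos π]

/-- Clamping `r` to `[a, b]` makes the slope bounded and uniformly Lipschitz, so that the angle
equation has global solutions; those starting well inside `[a, b]` do not feel the clamp during
one turn. -/
noncomputable def clampedSlope (F : ℝ × ℝ → ℝ) (ε : ℝ) {a b : ℝ} (hab : a ≤ b) (ψ : ℝ) :
    ℝ → ℝ :=
  IccExtend hab fun r => angleSlope F ε ψ r

section Annulus

variable {F : ℝ × ℝ → ℝ} {a b C ε r s ψ : ℝ} {L : ℝ≥0} {f : ℝ → ℝ}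

theorem clampedSlope_of_mem (hab : a ≤ b) (hr : r ∈ Icc a b) :
    clampedSlope F ε hab ψ r = angleSlope F ε ψ r :=
  IccExtend_of_mem hab _ hr

theorem clampedSlope_add_two_pi (hab : a ≤ b) (ψ : ℝ) :
    clampedSlope F ε hab (ψ + 2 * π) = clampedSlope F ε hab ψ := by
  simp only [clampedSlope, angleSlope_add_two_pi]

theorem abs_sub_apply_polar_le (hL : LipschitzOnWith L F (closedBall 0 b)) (ha : 0 ≤ a)
    (hr : r ∈ Icc a b) (hs : s ∈ Icc a b) :
    |F (polar r ψ) - F (polar s ψ)| ≤ L * |r - s| := by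
  have hmem : ∀ {t}, t ∈ Icc a b → polar t ψ ∈ closedBall 0 b := fun ht =>
    polar_mem_closedBall (by rw [abs_of_nonneg (ha.trans ht.1)]; exact ht.2) ψ
  rw [← Real.dist_eq]
  exact (hL.dist_le_mul _ (hmem hr) _ (hmem hs)).trans
    (mul_le_mul_of_nonneg_left (dist_polar_le r s ψ) L.2)

theorem abs_radialSpeed_sub_le (hL : LipschitzOnWith L F (closedBall 0 b)) (ha : 0 ≤ a)
    (hr : r ∈ Icc a b) (hs : s ∈ Icc a b) :
    |radialSpeed F ε ψ r - radialSpeed F ε ψ s| ≤ |ε| * L * |r - s| := by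
  rw [radialSpeed, radialSpeed, ← mul_sub, abs_mul, abs_mul]
  calc |ε| * |cos ψ| * |F (polar r ψ) - F (polar s ψ)| ≤ |ε| * 1 * (L * |r - s|) := by
        gcongr
        · exact abs_cos_le_one ψ
        · exact abs_sub_apply_polar_le hL ha hr hs
    _ = |ε| * L * |r - s| := by ring

variable (hC : ∀ p ∈ closedBall 0 b, |F p| ≤ C)
include hC

theorem abs_apply_polar_le (ha : 0 ≤ a) (hr : r ∈ Icc a b) : |F (polar r ψ)| ≤ C :=
  hC _ (polar_mem_closedBall (by rw [abs_of_nonneg (ha.trans hr.1)]; exact hr.2) ψ)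

theorem abs_radialSpeed_le (ha : 0 ≤ a) (hr : r ∈ Icc a b) :
    |radialSpeed F ε ψ r| ≤ |ε| * C := by
  rw [radialSpeed, abs_mul, abs_mul]
  calc |ε| * |cos ψ| * |F (polar r ψ)| ≤ |ε| * 1 * C :=
        mul_le_mul (mul_le_mul_of_nonneg_left (abs_cos_le_one ψ) (abs_nonneg ε))
          (abs_apply_polar_le hC ha hr) (abs_nonneg _) (by positivity)
    _ = |ε| * C := by ring

theorem abs_one_sub_angularSpeed_le (ha : 0 < a) (hr : r ∈ Icc a b) :
    |1 - angularSpeed F ε ψ r| ≤ |ε| * C / a := by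
  rw [angularSpeed, sub_sub_cancel, abs_div, abs_mul, abs_mul, abs_of_pos (ha.trans_le hr.1)]
  have hF := abs_apply_polar_le hC ha.le hr (ψ := ψ)
  have hC0 : 0 ≤ C := (abs_nonneg _).trans hF
  calc |ε| * |sin ψ| * |F (polar r ψ)| / r ≤ |ε| * 1 * C / a := by
        gcongr
        · exact abs_sin_le_one ψ
        · exact hr.1
    _ = |ε| * C / a := by ring

theorem abs_angularSpeed_sub_le (hL : LipschitzOnWith L F (closedBall 0 b)) (ha : 0 < a)
    (hr : r ∈ Icc a b) (hs : s ∈ Icc a b) :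
    |angularSpeed F ε ψ r - angularSpeed F ε ψ s| ≤ |ε| * (L / a + C / a ^ 2) * |r - s| := by
  rw [angularSpeed, angularSpeed, sub_sub_sub_cancel_left, mul_div_assoc, mul_div_assoc,
    ← mul_sub, abs_mul, abs_mul, abs_sub_comm]
  have hquot := abs_div_sub_div_le (x := F (polar r ψ)) (y := F (polar s ψ)) ha
    (le_abs.2 (Or.inl hr.1)) (le_abs.2 (Or.inl hs.1))
  calc |ε| * |sin ψ| * |F (polar r ψ) / r - F (polar s ψ) / s|
      ≤ |ε| * 1 * (L * |r - s| / a + C * |r - s| / a ^ 2) := by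
        gcongr
        · exact abs_sin_le_one ψ
        · refine hquot.trans ?_
          gcongr
          · exact abs_sub_apply_polar_le hL ha.le hr hs
          · exact abs_apply_polar_le hC ha.le hs
    _ = |ε| * (L / a + C / a ^ 2) * |r - s| := by ring

variable (ha : 0 < a) (hεC : |ε| * C ≤ a / 2)
include ha hεC

theorem abs_one_sub_angularSpeed_le_half (hr : r ∈ Icc a b) :
    |1 - angularSpeed F ε ψ r| ≤ 1 / 2 :=
  (abs_one_sub_angularSpeed_le hC ha hr).trans <| by
    rw [div_le_iff₀ ha]; linarith

theorem half_le_abs_angularSpeed (hr : r ∈ Icc a b) : 1 / 2 ≤ |angularSpeed F ε ψ r| := by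
  have := abs_one_sub_angularSpeed_le_half hC ha hεC hr (ψ := ψ)
  rw [abs_le] at this
  rw [abs_of_pos (by linarith)]
  linarith

theorem abs_angleSlope_le (hr : r ∈ Icc a b) : |angleSlope F ε ψ r| ≤ 2 * |ε| * C := by
  have hD := half_le_abs_angularSpeed hC ha hεC hr (ψ := ψ)
  have hN := abs_radialSpeed_le hC ha.le hr (ε := ε) (ψ := ψ)
  rw [angleSlope, abs_div, div_le_iff₀ (by linarith)]
  nlinarith [abs_nonneg (radialSpeed F ε ψ r)]

theorem abs_angleSlope_sub_le (hL : LipschitzOnWith L F (closedBall 0 b)) (hr : r ∈ Icc a b)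
    (hs : s ∈ Icc a b) :
    |angleSlope F ε ψ r - radialSpeed F ε ψ s| ≤
      2 * |ε| * L * |r - s| + 4 * ε ^ 2 * C ^ 2 / a := by
  have h := abs_div_sub_div_le (x := radialSpeed F ε ψ r) (y := radialSpeed F ε ψ s) (v := 1)
    one_half_pos (half_le_abs_angularSpeed hC ha hεC hr (ψ := ψ)) (by norm_num)
  rw [div_one, abs_sub_comm _ 1] at h
  refine h.trans ?_
  calc |radialSpeed F ε ψ r - radialSpeed F ε ψ s| / (1 / 2) +
        |radialSpeed F ε ψ s| * |1 - angularSpeed F ε ψ r| / (1 / 2) ^ 2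
      ≤ |ε| * L * |r - s| / (1 / 2) + |ε| * C * (|ε| * C / a) / (1 / 2) ^ 2 := by
        have := (abs_nonneg _).trans (abs_apply_polar_le hC ha.le hs (ψ := ψ))
        gcongr
        · exact abs_radialSpeed_sub_le hL ha.le hr hs
        · exact abs_radialSpeed_le hC ha.le hs
        · exact abs_one_sub_angularSpeed_le hC ha hr
    _ = 2 * |ε| * L * |r - s| + 4 * ε ^ 2 * C ^ 2 / a := by rw [← sq_abs ε]; ring

theorem exists_lipschitzOnWith_angleSlope (hL : LipschitzOnWith L F (closedBall 0 b)) :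
    ∃ K : ℝ≥0, ∀ ψ, LipschitzOnWith K (angleSlope F ε ψ) (Icc a b) := by
  refine ⟨Real.toNNReal (2 * |ε| * L + 4 * |ε| * C * (|ε| * (L / a + C / a ^ 2))),
    fun ψ => LipschitzOnWith.of_dist_le_mul fun r hr s hs => ?_⟩
  refine le_trans ?_ (mul_le_mul_of_nonneg_right (Real.le_coe_toNNReal _) dist_nonneg)
  rw [Real.dist_eq, Real.dist_eq]
  refine (abs_div_sub_div_le one_half_pos (half_le_abs_angularSpeed hC ha hεC hr (ψ := ψ))
    (half_le_abs_angularSpeed hC ha hεC hs (ψ := ψ))).trans ?_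
  calc |radialSpeed F ε ψ r - radialSpeed F ε ψ s| / (1 / 2) +
        |radialSpeed F ε ψ s| * |angularSpeed F ε ψ r - angularSpeed F ε ψ s| / (1 / 2) ^ 2
      ≤ |ε| * L * |r - s| / (1 / 2) +
        |ε| * C * (|ε| * (L / a + C / a ^ 2) * |r - s|) / (1 / 2) ^ 2 := by
        have := (abs_nonneg _).trans (abs_apply_polar_le hC ha.le hs (ψ := ψ))
        gcongr
        · exact abs_radialSpeed_sub_le hL ha.le hr hs
        · exact abs_radialSpeed_le hC ha.le hs
        · exact abs_angularSpeed_sub_le hC hL ha hr hs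
    _ = _ := by ring

theorem abs_clampedSlope_le (hab : a ≤ b) : |clampedSlope F ε hab ψ r| ≤ 2 * |ε| * C :=
  abs_angleSlope_le hC ha hεC (projIcc a b hab r).2

theorem exists_lipschitzWith_clampedSlope (hab : a ≤ b)
    (hL : LipschitzOnWith L F (closedBall 0 b)) :
    ∃ K : ℝ≥0, ∀ ψ, LipschitzWith K (clampedSlope F ε hab ψ) := by
  obtain ⟨K, hK⟩ := exists_lipschitzOnWith_angleSlope hC ha hεC hL
  exact ⟨K * 1, fun ψ => (hK ψ).to_restrict.comp (LipschitzWith.projIcc hab)⟩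

theorem continuous_clampedSlope (hab : a ≤ b) (hF : Continuous F) :
    Continuous fun p : ℝ × ℝ => clampedSlope F ε hab p.1 p.2 := by
  have hproj : Continuous fun p : ℝ × ℝ => (projIcc a b hab p.2 : ℝ) :=
    continuous_subtype_val.comp (continuous_projIcc.comp continuous_snd)
  have hpos : ∀ p : ℝ × ℝ, (projIcc a b hab p.2 : ℝ) ≠ 0 :=
    fun p => (ha.trans_le (projIcc a b hab p.2).2.1).ne'
  refine Continuous.div (by unfold radialSpeed; fun_prop)
    (continuous_const.sub (Continuous.div (by fun_prop) hproj hpos)) fun p => ?_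
  exact abs_pos.1 (one_half_pos.trans_le
    (half_le_abs_angularSpeed hC ha hεC (projIcc a b hab p.2).2))

theorem abs_sub_le_of_hasDerivAt_clampedSlope
    {hab : a ≤ b} (hf : ∀ ψ, HasDerivAt f (clampedSlope F ε hab ψ (f ψ)) ψ) (ψ : ℝ) :
    |f ψ - f 0| ≤ 2 * |ε| * C * |ψ| := by
  simpa using convex_univ.norm_image_sub_le_of_norm_hasDerivWithin_le
    (fun x _ => (hf x).hasDerivWithinAt) (fun x _ => abs_clampedSlope_le hC ha hεC hab)
    (mem_univ 0) (mem_univ ψ)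

theorem mem_Icc_of_hasDerivAt_clampedSlope
    {hab : a ≤ b} (hf : ∀ ψ, HasDerivAt f (clampedSlope F ε hab ψ (f ψ)) ψ)
    (h₁ : a ≤ f 0 - 4 * π * |ε| * C) (h₂ : f 0 + 4 * π * |ε| * C ≤ b) (hψ : ψ ∈ Icc 0 (2 * π)) :
    f ψ ∈ Icc a b ∧ |f ψ - f 0| ≤ 4 * π * |ε| * C := by
  have hdist : |f ψ - f 0| ≤ 4 * π * |ε| * C := by
    refine (abs_sub_le_of_hasDerivAt_clampedSlope hC ha hεC hf ψ).trans ?_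
    have hC0 : 0 ≤ C := (abs_nonneg _).trans (hC 0 (mem_closedBall_self (ha.le.trans hab)))
    calc 2 * |ε| * C * |ψ| ≤ 2 * |ε| * C * (2 * π) := by
          gcongr; rw [abs_of_nonneg hψ.1]; exact hψ.2
      _ = 4 * π * |ε| * C := by ring
  exact ⟨⟨by linarith [(abs_le.1 hdist).1], by linarith [(abs_le.1 hdist).2]⟩, hdist⟩

theorem abs_sub_sub_melnikovIntegral_le {hab : a ≤ b} (hF : Continuous F)
    (hL : LipschitzOnWith L F (closedBall 0 b))
    (hf : ∀ ψ, HasDerivAt f (clampedSlope F ε hab ψ (f ψ)) ψ)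
    (h₁ : a ≤ f 0 - 4 * π * |ε| * C) (h₂ : f 0 + 4 * π * |ε| * C ≤ b) :
    |f (2 * π) - f 0 - ε * melnikovIntegral F (f 0)| ≤
      2 * π * (8 * π * L * C + 4 * C ^ 2 / a) * ε ^ 2 := by
  have hC0 : 0 ≤ C := (abs_nonneg _).trans (hC 0 (mem_closedBall_self (ha.le.trans hab)))
  have hεC0 : 0 ≤ 4 * π * |ε| * C := by positivity
  have h₀ : f 0 ∈ Icc a b := ⟨by linarith, by linarith⟩
  have hfc : Continuous f := continuous_iff_continuousAt.2 fun ψ => (hf ψ).continuousAt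
  have hv : Continuous fun ψ => clampedSlope F ε hab ψ (f ψ) :=
    (continuous_clampedSlope hC ha hεC hab hF).comp₂ continuous_id hfc
  have hg : Continuous fun ψ => radialSpeed F ε ψ (f 0) := by unfold radialSpeed; fun_prop
  have hFTC : f (2 * π) - f 0 = ∫ ψ in 0..2 * π, clampedSlope F ε hab ψ (f ψ) :=
    (integral_eq_sub_of_hasDerivAt (fun ψ _ => hf ψ) (hv.intervalIntegrable _ _)).symm
  have hM : ε * melnikovIntegral F (f 0) = ∫ ψ in 0..2 * π, radialSpeed F ε ψ (f 0) := by
    simp only [melnikovIntegral, radialSpeed, ← intervalIntegral.integral_const_mul, mul_assoc]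
  have hbound : ∀ ψ ∈ uIoc 0 (2 * π),
      ‖clampedSlope F ε hab ψ (f ψ) - radialSpeed F ε ψ (f 0)‖ ≤
        (8 * π * L * C + 4 * C ^ 2 / a) * ε ^ 2 := by
    intro ψ hψ
    rw [uIoc_of_le two_pi_pos.le] at hψ
    obtain ⟨hmem, hdist⟩ :=
      mem_Icc_of_hasDerivAt_clampedSlope hC ha hεC hf h₁ h₂ (Ioc_subset_Icc_self hψ)
    rw [Real.norm_eq_abs, clampedSlope_of_mem hab hmem]
    refine (abs_angleSlope_sub_le hC ha hεC hL hmem h₀).trans ?_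
    calc 2 * |ε| * L * |f ψ - f 0| + 4 * ε ^ 2 * C ^ 2 / a
        ≤ 2 * |ε| * L * (4 * π * |ε| * C) + 4 * ε ^ 2 * C ^ 2 / a := by gcongr
      _ = (8 * π * L * C + 4 * C ^ 2 / a) * ε ^ 2 := by rw [← sq_abs ε]; ring
  rw [hFTC, hM, ← integral_sub (hv.intervalIntegrable _ _) (hg.intervalIntegrable _ _)]
  refine (norm_integral_le_of_norm_le_const hbound).trans_eq ?_
  rw [sub_zero, abs_of_pos two_pi_pos]
  ring

theorem exists_periodic_angleSlope_solution {hab : a ≤ b} (hF : Continuous F)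
    (hL : LipschitzOnWith L F (closedBall 0 b)) {r₁ r₂ : ℝ} (h₁₂ : r₁ ≤ r₂)
    (h₁ : a ≤ r₁ - 4 * π * |ε| * C) (h₂ : r₂ + 4 * π * |ε| * C ≤ b)
    (hP₁ : ∀ f : ℝ → ℝ, (∀ ψ, HasDerivAt f (clampedSlope F ε hab ψ (f ψ)) ψ) → f 0 = r₁ →
      r₁ ≤ f (2 * π))
    (hP₂ : ∀ f : ℝ → ℝ, (∀ ψ, HasDerivAt f (clampedSlope F ε hab ψ (f ψ)) ψ) → f 0 = r₂ →
      f (2 * π) ≤ r₂) :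
    ∃ ρ : ℝ → ℝ, (∀ ψ, HasDerivAt ρ (angleSlope F ε ψ (ρ ψ)) ψ) ∧ Periodic ρ (2 * π) ∧
      ∀ ψ, ρ ψ ∈ Icc a b := by
  obtain ⟨K, hK⟩ := exists_lipschitzWith_clampedSlope hC ha hεC hab hL
  have hvc : ∀ x, Continuous fun ψ => clampedSlope F ε hab ψ x := fun x =>
    (continuous_clampedSlope hC ha hεC hab hF).comp₂ continuous_id continuous_const
  choose sol hsol0 hsol using fun r => exists_forall_hasDerivAt_of_lipschitzWith hK hvc
    (fun ψ x => (Real.norm_eq_abs _).trans_le (abs_clampedSlope_le hC ha hεC hab)) r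
  have hmono : Monotone fun r => sol r (2 * π) := fun r s hrs =>
    ODE_solution_le_of_le hK (hsol r) (hsol s) (t₀ := 0) (by rwa [hsol0, hsol0]) _
  obtain ⟨s, hs, hfix⟩ := hmono.exists_isFixedPt_mem_Icc h₁₂ (hP₁ _ (hsol r₁) (hsol0 r₁))
    (hP₂ _ (hsol r₂) (hsol0 r₂))
  have hper : Periodic (sol s) (2 * π) :=
    ODE_solution_periodic hK (clampedSlope_add_two_pi hab) (hsol s) (hfix.trans (hsol0 s).symm)
  have hmem : ∀ ψ, sol s ψ ∈ Icc a b := fun ψ => by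
    obtain ⟨y, hy, hψy⟩ := hper.exists_mem_Ico₀ two_pi_pos ψ
    rw [hψy]
    exact (mem_Icc_of_hasDerivAt_clampedSlope hC ha hεC (hsol s) (by rw [hsol0]; linarith [hs.1])
      (by rw [hsol0]; linarith [hs.2]) (Ico_subset_Icc_self hy)).1
  refine ⟨sol s, fun ψ => ?_, hper, hmem⟩
  rw [← clampedSlope_of_mem hab (hmem ψ)]
  exact hsol s ψ

theorem exists_isPeriodicOrbit_of_melnikovIntegral (hab : a ≤ b) (hF : Continuous F)
    (hL : LipschitzOnWith L F (closedBall 0 b)) (hε : 0 < ε) {r₁ r₂ : ℝ} (h₁₂ : r₁ ≤ r₂)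
    (h₁ : a ≤ r₁ - 4 * π * |ε| * C) (h₂ : r₂ + 4 * π * |ε| * C ≤ b)
    (hM₁ : 2 * π * (8 * π * L * C + 4 * C ^ 2 / a) * ε < melnikovIntegral F r₁)
    (hM₂ : melnikovIntegral F r₂ < -(2 * π * (8 * π * L * C + 4 * C ^ 2 / a) * ε)) :
    ∃ O, IsPeriodicOrbit (fun p => p.2 + ε * F p) (fun p => -p.1) O := by
  have hdisp := fun f hf h₁ h₂ =>
    abs_sub_sub_melnikovIntegral_le (f := f) (hab := hab) hC ha hεC hF hL hf h₁ h₂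
  obtain ⟨ρ, hρ, hper, hmem⟩ := exists_periodic_angleSlope_solution hC ha hεC hF hL h₁₂ h₁ h₂
    (fun f hf hf0 => by
      have h := hdisp f hf (by rwa [hf0]) (by rw [hf0]; linarith)
      rw [hf0] at h
      nlinarith [(abs_le.1 h).1])
    (fun f hf hf0 => by
      have h := hdisp f hf (by rw [hf0]; linarith) (by rwa [hf0])
      rw [hf0] at h
      nlinarith [(abs_le.1 h).2])
  refine exists_isPeriodicOrbit_of_angleSlope hF hρ hper (fun ψ => ha.trans_le (hmem ψ).1)
    fun ψ => ?_
  linarith [(abs_le.1 (abs_one_sub_angularSpeed_le_half hC ha hεC (hmem ψ) (ψ := ψ))).2]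

end Annulus

theorem eventually_nhdsGT_exists_isPeriodicOrbit {F : ℝ × ℝ → ℝ} (hF : LocallyLipschitz F)
    {r₁ r₂ : ℝ} (hr₁ : 0 < r₁) (h₁₂ : r₁ ≤ r₂) (hM₁ : 0 < melnikovIntegral F r₁)
    (hM₂ : melnikovIntegral F r₂ < 0) :
    ∀ᶠ ε in 𝓝[>] 0, ∃ O, IsPeriodicOrbit (fun p => p.2 + ε * F p) (fun p => -p.1) O := by
  have ha : 0 < r₁ / 2 := half_pos hr₁
  obtain ⟨L, hL⟩ := hF.locallyLipschitzOn.exists_lipschitzOnWith_of_compact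
    (isCompact_closedBall (0 : ℝ × ℝ) (r₂ + r₁ / 2))
  obtain ⟨C, hC⟩ := (isCompact_closedBall (0 : ℝ × ℝ) (r₂ + r₁ / 2)).exists_bound_of_continuousOn
    hF.continuous.continuousOn
  have small : ∀ k c : ℝ, 0 < c → ∀ᶠ ε in 𝓝[>] (0 : ℝ), |ε| * k < c := fun k c hc =>
    nhdsWithin_le_nhds <| (by fun_prop : Continuous fun ε : ℝ => |ε| * k).continuousAt.eventually_lt
      continuousAt_const (by simpa using hc)
  have hK := small (2 * π * (8 * π * L * C + 4 * C ^ 2 / (r₁ / 2)))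
  filter_upwards [self_mem_nhdsWithin, small C (r₁ / 2 / 2) (half_pos ha),
    small (4 * π * C) (r₁ / 2) ha, hK _ hM₁, hK _ (neg_pos.2 hM₂)]
    with ε (hε : 0 < ε) hεC hrad hK₁ hK₂
  rw [abs_of_pos hε] at hK₁ hK₂
  exact exists_isPeriodicOrbit_of_melnikovIntegral hC ha (by linarith) (by linarith)
    hF.continuous hL hε h₁₂ (by linarith) (by linarith) (by linarith) (by linarith)

theorem melnikovIntegral_comp_neg_snd (F : ℝ × ℝ → ℝ) (r : ℝ) :
    melnikovIntegral (fun p => F (p.1, -p.2)) r = melnikovIntegral F r := by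
  let g : ℝ → ℝ := fun ψ => cos ψ * F (polar r ψ)
  have hg : Periodic g (2 * π) := fun ψ => by simp only [g, cos_add_two_pi, polar_add_two_pi]
  have hpolar : ∀ ψ, ((polar r ψ).1, -(polar r ψ).2) = polar r (-ψ) := fun ψ => by
    simp [polar]
  calc melnikovIntegral (fun p => F (p.1, -p.2)) r = ∫ ψ in 0..2 * π, g (-ψ) := by
        simp only [melnikovIntegral, hpolar, g, cos_neg]
    _ = ∫ ψ in -(2 * π)..-(2 * π) + 2 * π, g ψ := by
        rw [integral_comp_neg, neg_zero, neg_add_cancel]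
    _ = melnikovIntegral F r := by
        rw [hg.intervalIntegral_add_eq (-(2 * π)) 0, zero_add]; rfl

theorem eventually_nhdsNE_exists_isPeriodicOrbit {F : ℝ × ℝ → ℝ} (hF : LocallyLipschitz F)
    {r₁ r₂ : ℝ} (hr₁ : 0 < r₁) (h₁₂ : r₁ ≤ r₂) (hM₁ : 0 < melnikovIntegral F r₁)
    (hM₂ : melnikovIntegral F r₂ < 0) :
    ∀ᶠ ε in 𝓝[≠] 0, ∃ O, IsPeriodicOrbit (fun p => p.2 + ε * F p) (fun p => -p.1) O := by
  rw [← nhdsLT_sup_nhdsGT, eventually_sup]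
  refine ⟨?_, eventually_nhdsGT_exists_isPeriodicOrbit hF hr₁ h₁₂ hM₁ hM₂⟩
  have hreflect : LocallyLipschitz fun p : ℝ × ℝ => F (p.1, -p.2) :=
    hF.comp (LipschitzWith.prod_fst.prodMk LipschitzWith.prod_snd.neg).locallyLipschitz
  have hneg : Tendsto (fun ε : ℝ => -ε) (𝓝[<] 0) (𝓝[>] 0) :=
    tendsto_nhdsWithin_of_tendsto_nhds_of_eventually_within _
      ((continuous_neg.tendsto' 0 0 neg_zero).mono_left nhdsWithin_le_nhds)
      (eventually_nhdsWithin_of_forall fun ε (hε : ε < 0) => neg_pos.2 hε)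
  filter_upwards [hneg.eventually (eventually_nhdsGT_exists_isPeriodicOrbit hreflect hr₁ h₁₂
    (by rwa [melnikovIntegral_comp_neg_snd]) (by rwa [melnikovIntegral_comp_neg_snd]))]
    with ε ⟨_, γ, hsol, hper, hnc, _⟩
  refine ⟨_, _, ?_, hper.comp_neg, hnc.comp_neg, rfl⟩
  convert hsol.comp_neg using 1
  funext p
  simp only [neg_neg]
  ring

noncomputable def cubicPerturbation (m : ℕ) (p : ℝ × ℝ) : ℝ := -(|p.2| ^ m * (p.1 ^ 3 - p.1))

theorem locallyLipschitz_cubicPerturbation (m : ℕ) : LocallyLipschitz (cubicPerturbation m) := by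
  have hprod : LocallyLipschitz fun q : ℝ × ℝ => -(q.1 * q.2) :=
    (contDiff_mul.neg : ContDiff ℝ 1 fun q : ℝ × ℝ => -(q.1 * q.2)).locallyLipschitz
  have hy : LocallyLipschitz fun p : ℝ × ℝ => ‖p.2 ^ m‖ :=
    lipschitzWith_one_norm.locallyLipschitz.comp
      (contDiff_snd.pow m : ContDiff ℝ 1 fun p : ℝ × ℝ => p.2 ^ m).locallyLipschitz
  have hx : LocallyLipschitz fun p : ℝ × ℝ => p.1 ^ 3 - p.1 :=
    ((contDiff_fst.pow 3).sub contDiff_fst :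
      ContDiff ℝ 1 fun p : ℝ × ℝ => p.1 ^ 3 - p.1).locallyLipschitz
  convert hprod.comp (hy.prodMk hx) using 1
  funext p
  simp [cubicPerturbation, Real.norm_eq_abs]

noncomputable def sinCosMoment (m k : ℕ) : ℝ := ∫ ψ in 0..2 * π, |sin ψ| ^ m * cos ψ ^ k

theorem sinCosMoment_pos (m j : ℕ) : 0 < sinCosMoment m (2 * j) := by
  refine integral_pos two_pi_pos (by fun_prop) (fun ψ _ => ?_)
    ⟨π / 4, ⟨by positivity, by linarith [pi_pos]⟩, ?_⟩
  · rw [pow_mul]; positivity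
  · rw [cos_pi_div_four, sin_pi_div_four]; positivity

theorem sinCosMoment_four_le_two (m : ℕ) : sinCosMoment m 4 ≤ sinCosMoment m 2 := by
  refine integral_mono_on two_pi_pos.le (Continuous.intervalIntegrable (by fun_prop) _ _)
    (Continuous.intervalIntegrable (by fun_prop) _ _) fun ψ _ => ?_
  have : cos ψ ^ 4 ≤ cos ψ ^ 2 := by nlinarith [cos_sq_le_one ψ, sq_nonneg (cos ψ)]
  exact mul_le_mul_of_nonneg_left this (by positivity)

theorem melnikovIntegral_cubicPerturbation (m : ℕ) {r : ℝ} (hr : 0 ≤ r) :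
    melnikovIntegral (cubicPerturbation m) r =
      r ^ (m + 1) * (sinCosMoment m 2 - r ^ 2 * sinCosMoment m 4) := by
  have hpt : ∀ ψ, cos ψ * cubicPerturbation m (polar r ψ) =
      r ^ (m + 1) * (|sin ψ| ^ m * cos ψ ^ 2) - r ^ (m + 3) * (|sin ψ| ^ m * cos ψ ^ 4) := by
    intro ψ
    simp only [cubicPerturbation, polar, abs_neg, abs_mul, abs_of_nonneg hr, mul_pow]
    ring
  simp only [melnikovIntegral, sinCosMoment, hpt]
  rw [intervalIntegral.integral_sub (Continuous.intervalIntegrable (by fun_prop) _ _)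
    (Continuous.intervalIntegrable (by fun_prop) _ _), intervalIntegral.integral_const_mul,
    intervalIntegral.integral_const_mul]
  ring

theorem exists_melnikovIntegral_cubicPerturbation_sign_change (m : ℕ) :
    ∃ r₁ r₂ : ℝ, 0 < r₁ ∧ r₁ ≤ r₂ ∧ 0 < melnikovIntegral (cubicPerturbation m) r₁ ∧
      melnikovIntegral (cubicPerturbation m) r₂ < 0 := by
  have h₄ : 0 < sinCosMoment m 4 := sinCosMoment_pos m 2
  have h₂₄ := sinCosMoment_four_le_two m
  have hq : 0 ≤ sinCosMoment m 2 / sinCosMoment m 4 := div_nonneg (h₄.le.trans h₂₄) h₄.le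
  refine ⟨1 / 2, sinCosMoment m 2 / sinCosMoment m 4 + 1, by norm_num, by linarith, ?_, ?_⟩
  · rw [melnikovIntegral_cubicPerturbation m (by norm_num)]
    exact mul_pos (by positivity) (by nlinarith)
  · rw [melnikovIntegral_cubicPerturbation m (by positivity)]
    refine mul_neg_of_pos_of_neg (by positivity) ?_
    have : sinCosMoment m 2 = sinCosMoment m 2 / sinCosMoment m 4 * sinCosMoment m 4 := by
      field_simp
    nlinarith

theorem stmt_15_general (m : ℕ) :
    ∃ lam₀ > (0:ℝ), ∀ lam : ℝ, 0 < |lam| → |lam| < lam₀ →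
      ∃ γ : ℝ → ℝ × ℝ,
        IsSolution (fun p => p.2 - lam * |p.2| ^ m * (p.1 ^ 3 - p.1))
          (fun p => -p.1) γ ∧
        IsPeriodicSol γ ∧ IsNonconstant γ := by
  obtain ⟨r₁, r₂, hr₁, h₁₂, hM₁, hM₂⟩ := exists_melnikovIntegral_cubicPerturbation_sign_change m
  obtain ⟨δ, hδ, hsmall⟩ := Metric.eventually_nhds_iff.1 <| eventually_nhdsWithin_iff.1 <|
    eventually_nhdsNE_exists_isPeriodicOrbit (locallyLipschitz_cubicPerturbation m) hr₁ h₁₂ hM₁ hM₂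
  refine ⟨δ, hδ, fun lam hlam hlt => ?_⟩
  obtain ⟨_, γ, hγ, hper, hnc, -⟩ := hsmall (by rwa [Real.dist_eq, sub_zero]) (abs_pos.1 hlam)
  refine ⟨γ, ?_, hper, hnc⟩
  convert hγ using 1
  funext p
  simp only [cubicPerturbation]
  ring

/-- Theorem (th:vil)(i): for `m ≥ 2` and `|λ| ≠ 0` small enough, the system
`ẋ = y − λ|y|^m(x³ − x)`, `ẏ = −x` has at least one nonconstant periodic solution. -/
theorem stmt_15 (m : ℕ) (hm : 2 ≤ m) :
    ∃ lam₀ > (0:ℝ), ∀ lam : ℝ, 0 < |lam| → |lam| < lam₀ →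
      ∃ γ : ℝ → ℝ × ℝ,
        IsSolution (fun p => p.2 - lam * |p.2| ^ m * (p.1 ^ 3 - p.1))
          (fun p => -p.1) γ ∧
        IsPeriodicSol γ ∧ IsNonconstant γ :=
  stmt_15_general m
end
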